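/- arXiv:2203.11481 — 2 statements merged into one kernel-verified Lean document; each statement's English description precedes it below -/
import Mathlib

section
/- Let W ⊆ ℝ^d be a nonempty closed convex set with metric projection Π_W, and let F : ℝ^d → ℝ be differentiable and λ-strongly convex (λ > 0), with w* = argmin_{w∈W} F(w). On a probability space with filtration (𝓕_t), let w_1 ∈ W be fixed and define w_{t+1} = Π_W(w_t − η_t g_t) with step sizes η_t = 2/(λ(t+1)), where each g_t is an 𝓕_{t+1}-measurable random vector satisfying E[g_t | 𝓕_t] = ∇F(w_t) and E[‖g_t‖² | 𝓕_t] ≤ G² almost surely (and w_t is 𝓕_t-measurable). Then for every T ≥ 1 the weighted average w̄_T := (2/(T(T+1))) Σ_{t=1}^T t·w_t satisfies E[F(w̄_T)] − F(w*) ≤ 2G²/(λ(T+1)). -/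
/-!
Nonexpansiveness of the projection towards `w* ∈ W` gives
`‖w_{t+1} - w*‖² ≤ ‖w_t - w*‖² - 2η_t⟪g_t, w_t - w*⟫ + η_t²‖g_t‖²`. Conditioning on `𝓕_t`
replaces `g_t` by `∇F(w_t)` in the inner product, and strong convexity bounds
`⟪∇F(w_t), w_t - w*⟫` below by `F(w_t) - F(w*) + (λ/2)‖w_t - w*‖²`. For `η_t = 2/(λ(t+1))`,
multiplying the resulting recursion for `a_t = E‖w_t - w*‖²` by `λt(t+1)/4` makes the `a_t` terms
telescope, so `∑ t (E F(w_t) - F(w*)) ≤ T G²/λ`; Jensen's inequality for the weights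
`2t/(T(T+1))` concludes.
-/

open MeasureTheory ProbabilityTheory RealInnerProductSpace Finset

section Projection

variable {E : Type*} [NormedAddCommGroup E] [InnerProductSpace ℝ E] {K : Set E} {x p y : E}

theorem Convex.norm_nearest_sub_le (hK : Convex ℝ K) (hp : p ∈ K)
    (hmin : ∀ q ∈ K, ‖x - p‖ ≤ ‖x - q‖) (hy : y ∈ K) : ‖p - y‖ ≤ ‖x - y‖ := by
  have : Nonempty K := ⟨⟨p, hp⟩⟩
  have hinf : ‖x - p‖ = ⨅ q : K, ‖x - q‖ :=
    le_antisymm (le_ciInf fun q => hmin q q.2)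
      (ciInf_le ⟨0, Set.forall_mem_range.2 fun _ => norm_nonneg _⟩ (⟨p, hp⟩ : K))
  have hobtuse : ⟪x - p, y - p⟫ ≤ 0 := (norm_eq_iInf_iff_real_inner_le_zero hK hp).1 hinf y hy
  have hexpand : ‖x - y‖ ^ 2 = ‖x - p‖ ^ 2 - 2 * ⟪x - p, y - p⟫ + ‖p - y‖ ^ 2 := by
    rw [← norm_neg (p - y), neg_sub, ← norm_sub_sq_real, sub_sub_sub_cancel_right]
  nlinarith [norm_nonneg (p - y), norm_nonneg (x - y), sq_nonneg ‖x - p‖]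

theorem Convex.sq_norm_nearest_step_sub_le (hK : Convex ℝ K) {v : E} {η : ℝ} (hp : p ∈ K)
    (hmin : ∀ q ∈ K, ‖x - η • v - p‖ ≤ ‖x - η • v - q‖) (hy : y ∈ K) :
    ‖p - y‖ ^ 2 ≤ ‖x - y‖ ^ 2 - 2 * η * ⟪v, x - y⟫ + η ^ 2 * ‖v‖ ^ 2 := by
  have hexpand : ‖x - η • v - y‖ ^ 2 = ‖x - y‖ ^ 2 - 2 * η * ⟪v, x - y⟫ + η ^ 2 * ‖v‖ ^ 2 := by
    rw [sub_right_comm, norm_sub_sq_real, real_inner_smul_right, norm_smul, mul_pow,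
      Real.norm_eq_abs, sq_abs, real_inner_comm]
    ring
  rw [← hexpand]
  exact pow_le_pow_left₀ (norm_nonneg _) (hK.norm_nearest_sub_le hp hmin hy) 2

end Projection

theorem convexOn_univ_of_le_add_inner {E : Type*} [NormedAddCommGroup E] [InnerProductSpace ℝ E]
    {f : E → ℝ} (f' : E → E) (h : ∀ x y, f y + ⟪f' y, x - y⟫ ≤ f x) :
    ConvexOn ℝ Set.univ f := by
  refine ⟨convex_univ, fun x _ y _ a b ha hb hab => ?_⟩
  obtain rfl : b = 1 - a := by linarith
  set z := a • x + (1 - a) • y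
  have hbalance : a * ⟪f' z, x - z⟫ + (1 - a) * ⟪f' z, y - z⟫ = 0 := by
    rw [← real_inner_smul_right, ← real_inner_smul_right, ← inner_add_right]
    convert inner_zero_right (f' z) using 2
    module
  have hx := mul_le_mul_of_nonneg_left (h x z) ha
  have hy := mul_le_mul_of_nonneg_left (h y z) hb
  simp only [smul_eq_mul]
  linarith

section Expectation

variable {Ω E : Type*} {m m0 : MeasurableSpace Ω} {μ : Measure Ω}
  [NormedAddCommGroup E] [InnerProductSpace ℝ E]

theorem integrable_inner_of_integrable_sq_norm {f g : Ω → E} (hf : AEStronglyMeasurable f μ)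
    (hg : AEStronglyMeasurable g μ) (hf2 : Integrable (fun ω => ‖f ω‖ ^ 2) μ)
    (hg2 : Integrable (fun ω => ‖g ω‖ ^ 2) μ) : Integrable (fun ω => ⟪f ω, g ω⟫) μ := by
  refine Integrable.mono' ((hf2.add hg2).div_const 2) (hf.inner hg) (ae_of_all _ fun ω => ?_)
  rw [Pi.add_apply, Real.norm_eq_abs]
  nlinarith [abs_real_inner_le_norm (f ω) (g ω), sq_nonneg (‖f ω‖ - ‖g ω‖)]

theorem condExp_inner_of_stronglyMeasurable_right [CompleteSpace E] {f g : Ω → E}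
    (hg : StronglyMeasurable[m] g) (hfg : Integrable (fun ω => ⟪f ω, g ω⟫) μ)
    (hf : Integrable f μ) :
    μ[fun ω => ⟪f ω, g ω⟫|m] =ᵐ[μ] fun ω => ⟪μ[f|m] ω, g ω⟫ :=
  condExp_bilin_of_stronglyMeasurable_right (innerSL ℝ) hg hfg hf

theorem integral_le_of_condExp_le_const [IsProbabilityMeasure μ] (hm : m ≤ m0) {f : Ω → ℝ}
    {c : ℝ} (h : μ[f|m] ≤ᵐ[μ] fun _ => c) : ∫ ω, f ω ∂μ ≤ c := by
  rw [← integral_condExp hm]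
  simpa using integral_mono_ae integrable_condExp (integrable_const c) h

theorem ConvexOn.integral_map_sum_le [IsFiniteMeasure μ] {ι : Type*} {s : Finset ι} {K : Set E}
    {F : E → ℝ} {b : ℝ} (hF : ConvexOn ℝ K F) (hFc : Continuous F) (hb : ∀ y ∈ K, b ≤ F y)
    {c : ι → ℝ} (h0 : ∀ i ∈ s, 0 ≤ c i) (h1 : ∑ i ∈ s, c i = 1) {x : ι → Ω → E}
    (hxK : ∀ i ∈ s, ∀ ω, x i ω ∈ K) (hx : ∀ i ∈ s, AEStronglyMeasurable (x i) μ)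
    (hFx : ∀ i ∈ s, Integrable (fun ω => F (x i ω)) μ) :
    ∫ ω, F (∑ i ∈ s, c i • x i ω) ∂μ ≤ ∑ i ∈ s, c i * ∫ ω, F (x i ω) ∂μ := by
  have hjensen : ∀ ω, F (∑ i ∈ s, c i • x i ω) ≤ ∑ i ∈ s, c i * F (x i ω) := fun ω =>
    hF.map_sum_le h0 h1 fun i hi => hxK i hi ω
  have hsum : Integrable (fun ω => ∑ i ∈ s, c i * F (x i ω)) μ :=
    integrable_finsetSum _ fun i hi => (hFx i hi).const_mul _
  have hmeas : AEStronglyMeasurable (fun ω => F (∑ i ∈ s, c i • x i ω)) μ :=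
    hFc.comp_aestronglyMeasurable
      (Finset.aestronglyMeasurable_fun_sum _ fun i hi => (hx i hi).const_smul _)
  have hint : Integrable (fun ω => F (∑ i ∈ s, c i • x i ω)) μ :=
    integrable_of_le_of_le hmeas
      (ae_of_all _ fun ω => hb _ (hF.1.sum_mem h0 h1 fun i hi => hxK i hi ω))
      (ae_of_all _ hjensen) (integrable_const b) hsum
  calc ∫ ω, F (∑ i ∈ s, c i • x i ω) ∂μ ≤ ∫ ω, ∑ i ∈ s, c i * F (x i ω) ∂μ :=
        integral_mono hint hsum hjensen
    _ = ∑ i ∈ s, c i * ∫ ω, F (x i ω) ∂μ := by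
        rw [integral_finsetSum _ fun i hi => (hFx i hi).const_mul _]
        simp only [integral_const_mul]

end Expectation

theorem sum_Icc_one_natCast (n : ℕ) : ∑ t ∈ Icc 1 n, (t : ℝ) = n * (n + 1) / 2 := by
  induction n with
  | zero => simp
  | succ n ih =>
    rw [sum_Icc_succ_top (by omega), ih]
    push_cast
    ring

namespace ProjectedSGD

theorem sum_weighted_gap_le {lam G2 : ℝ} (hlam : 0 < lam) (hG2 : 0 ≤ G2) {a D : ℕ → ℝ}
    (ha : ∀ t, 0 ≤ a t)
    (hrec : ∀ t : ℕ, 1 ≤ t → a (t + 1) ≤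
      a t - 2 * (2 / (lam * (t + 1))) * (D t + lam / 2 * a t) + (2 / (lam * (t + 1))) ^ 2 * G2)
    (T : ℕ) : ∑ t ∈ Icc 1 T, (t : ℝ) * D t ≤ T * G2 / lam := by
  suffices key : ∀ T : ℕ,
      ∑ t ∈ Icc 1 T, (t : ℝ) * D t + lam / 4 * (T * (T + 1)) * a (T + 1) ≤ T * G2 / lam by
    have : 0 ≤ lam / 4 * (T * (T + 1)) * a (T + 1) := by have := ha (T + 1); positivity
    linarith [key T]
  intro T
  induction T with
  | zero => simp
  | succ T ih =>
    rw [sum_Icc_succ_top (by omega)]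
    have h := hrec (T + 1) (by omega)
    push_cast at h ⊢
    have hT : (0 : ℝ) ≤ T := T.cast_nonneg
    have hmul := mul_le_mul_of_nonneg_left h (by positivity : 0 ≤ lam * (T + 1) * (T + 2) / 4)
    have hexp : lam * (T + 1) * (T + 2) / 4 * (a (T + 1) - 2 * (2 / (lam * (T + 1 + 1))) *
        (D (T + 1) + lam / 2 * a (T + 1)) + (2 / (lam * (T + 1 + 1))) ^ 2 * G2) =
        lam / 4 * (T * (T + 1)) * a (T + 1) - (T + 1) * D (T + 1) +
          (T + 1) * G2 / (lam * (T + 2)) := by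
      field_simp
      ring
    have hfrac : (T + 1) * G2 / (lam * (T + 2)) ≤ G2 / lam := by
      rw [div_le_div_iff₀ (by positivity) hlam]
      nlinarith [mul_nonneg hG2 hlam.le]
    rw [hexp] at hmul
    have : ((T : ℝ) + 1) * G2 / lam = T * G2 / lam + G2 / lam := by ring
    linarith

theorem averaged_gap_le {lam G2 : ℝ} (hlam : 0 < lam) (hG2 : 0 ≤ G2) {a D : ℕ → ℝ}
    (ha : ∀ t, 0 ≤ a t)
    (hrec : ∀ t : ℕ, 1 ≤ t → a (t + 1) ≤
      a t - 2 * (2 / (lam * (t + 1))) * (D t + lam / 2 * a t) + (2 / (lam * (t + 1))) ^ 2 * G2)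
    {T : ℕ} (hT : 1 ≤ T) :
    ∑ t ∈ Icc 1 T, 2 / (T * (T + 1)) * (t : ℝ) * D t ≤ 2 * G2 / (lam * (T + 1)) := by
  have hT0 : (0 : ℝ) < T := by exact_mod_cast hT
  calc ∑ t ∈ Icc 1 T, 2 / (T * (T + 1)) * (t : ℝ) * D t
      = 2 / (T * (T + 1)) * ∑ t ∈ Icc 1 T, (t : ℝ) * D t := by
        rw [mul_sum]
        simp only [mul_assoc]
    _ ≤ 2 / (T * (T + 1)) * (T * G2 / lam) := by
        gcongr
        exact sum_weighted_gap_le hlam hG2 ha hrec T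
    _ = 2 * G2 / (lam * (T + 1)) := by field_simp

variable {Ω E : Type*} {m m0 : MeasurableSpace Ω} {μ : Measure Ω}
  [NormedAddCommGroup E] [InnerProductSpace ℝ E] {X Y g : Ω → E} {z : E} {η : ℝ}

theorem integrable_sq_norm_sub_of_step (hX : AEStronglyMeasurable X μ)
    (hg : AEStronglyMeasurable g μ) (hY : AEStronglyMeasurable Y μ)
    (hX2 : Integrable (fun ω => ‖X ω - z‖ ^ 2) μ) (hg2 : Integrable (fun ω => ‖g ω‖ ^ 2) μ)
    (hstep : ∀ ω, ‖Y ω - z‖ ^ 2 ≤ ‖X ω - z‖ ^ 2 - 2 * η * ⟪g ω, X ω - z⟫ + η ^ 2 * ‖g ω‖ ^ 2) :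
    Integrable (fun ω => ‖Y ω - z‖ ^ 2) μ :=
  integrable_of_le_of_le ((hY.sub aestronglyMeasurable_const).norm.pow 2)
    (ae_of_all _ fun _ => sq_nonneg _) (ae_of_all _ hstep) (integrable_zero _ _ _)
    ((hX2.sub ((integrable_inner_of_integrable_sq_norm hg (hX.sub aestronglyMeasurable_const)
      hg2 hX2).const_mul (2 * η))).add (hg2.const_mul (η ^ 2)))

theorem integral_step_le [IsProbabilityMeasure μ] [CompleteSpace E] (hm : m ≤ m0) {F : E → ℝ}
    (hFc : Continuous F) {lam : ℝ}
    (hsc : ∀ v w, F w + ⟪gradient F w, v - w⟫ + lam / 2 * ‖v - w‖ ^ 2 ≤ F v) {K : Set E}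
    (hzmin : ∀ y ∈ K, F z ≤ F y) (hXK : ∀ ω, X ω ∈ K) (hX : StronglyMeasurable[m] X)
    (hg : Integrable g μ) (hg2 : Integrable (fun ω => ‖g ω‖ ^ 2) μ)
    (hX2 : Integrable (fun ω => ‖X ω - z‖ ^ 2) μ)
    (hunb : μ[g|m] =ᵐ[μ] fun ω => gradient F (X ω)) {G2 : ℝ} (hG2 : ∫ ω, ‖g ω‖ ^ 2 ∂μ ≤ G2)
    (hη : 0 ≤ η) (hY : Integrable (fun ω => ‖Y ω - z‖ ^ 2) μ)
    (hstep : ∀ ω, ‖Y ω - z‖ ^ 2 ≤ ‖X ω - z‖ ^ 2 - 2 * η * ⟪g ω, X ω - z⟫ + η ^ 2 * ‖g ω‖ ^ 2) :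
    Integrable (fun ω => F (X ω)) μ ∧
      ∫ ω, ‖Y ω - z‖ ^ 2 ∂μ ≤ ∫ ω, ‖X ω - z‖ ^ 2 ∂μ
        - 2 * η * ((∫ ω, F (X ω) ∂μ) - F z + lam / 2 * ∫ ω, ‖X ω - z‖ ^ 2 ∂μ) + η ^ 2 * G2 := by
  have hXm : AEStronglyMeasurable X μ := (hX.mono hm).aestronglyMeasurable
  have hinner : Integrable (fun ω => ⟪g ω, X ω - z⟫) μ :=
    integrable_inner_of_integrable_sq_norm hg.1 (hXm.sub aestronglyMeasurable_const) hg2 hX2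
  have hcond : μ[fun ω => ⟪g ω, X ω - z⟫|m] =ᵐ[μ] fun ω => ⟪gradient F (X ω), X ω - z⟫ := by
    filter_upwards [condExp_inner_of_stronglyMeasurable_right
      (hX.sub stronglyMeasurable_const : StronglyMeasurable[m] fun ω => X ω - z) hinner hg, hunb]
      with ω hω hω'
    rw [← hω']
    exact hω
  have hgrad : Integrable (fun ω => ⟪gradient F (X ω), X ω - z⟫) μ :=
    integrable_condExp.congr hcond
  have hE : ∫ ω, ⟪g ω, X ω - z⟫ ∂μ = ∫ ω, ⟪gradient F (X ω), X ω - z⟫ ∂μ :=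
    (integral_condExp hm).symm.trans (integral_congr_ae hcond)
  have hgap : ∀ ω, F (X ω) - F z + lam / 2 * ‖X ω - z‖ ^ 2 ≤ ⟪gradient F (X ω), X ω - z⟫ := by
    intro ω
    have h := hsc z (X ω)
    rw [← neg_sub, inner_neg_right, norm_neg] at h
    linarith
  have hFX : Integrable (fun ω => F (X ω)) μ :=
    integrable_of_le_of_le
      (g₂ := fun ω => ⟪gradient F (X ω), X ω - z⟫ - lam / 2 * ‖X ω - z‖ ^ 2 + F z)
      (hFc.comp_aestronglyMeasurable hXm) (ae_of_all _ fun ω => hzmin _ (hXK ω))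
      (ae_of_all _ fun ω => by linarith [hgap ω]) (integrable_const (F z))
      ((hgrad.sub (hX2.const_mul _)).add (integrable_const (F z)))
  refine ⟨hFX, ?_⟩
  have hIgap : ∫ ω, F (X ω) - F z + lam / 2 * ‖X ω - z‖ ^ 2 ∂μ ≤
      ∫ ω, ⟪gradient F (X ω), X ω - z⟫ ∂μ :=
    integral_mono ((hFX.sub (integrable_const _)).add (hX2.const_mul _)) hgrad hgap
  have hIstep : ∫ ω, ‖Y ω - z‖ ^ 2 ∂μ ≤
      ∫ ω, ‖X ω - z‖ ^ 2 - 2 * η * ⟪g ω, X ω - z⟫ + η ^ 2 * ‖g ω‖ ^ 2 ∂μ :=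
    integral_mono hY ((hX2.sub (hinner.const_mul _)).add (hg2.const_mul _)) hstep
  have hFXz : Integrable (fun ω => F (X ω) - F z) μ := hFX.sub (integrable_const _)
  have hXg : Integrable (fun ω => ‖X ω - z‖ ^ 2 - 2 * η * ⟪g ω, X ω - z⟫) μ :=
    hX2.sub (hinner.const_mul _)
  rw [integral_add hFXz (hX2.const_mul _), integral_sub hFX (integrable_const _),
    integral_const_mul, integral_const, probReal_univ, one_smul] at hIgap
  rw [integral_add hXg (hg2.const_mul _), integral_sub hX2 (hinner.const_mul _),
    integral_const_mul, integral_const_mul, hE] at hIstep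
  nlinarith [mul_le_mul_of_nonneg_left hIgap (by positivity : 0 ≤ 2 * η),
    mul_le_mul_of_nonneg_left hG2 (by positivity : 0 ≤ η ^ 2)]

end ProjectedSGD

theorem sgd_strongly_convex_convergence_general
    {Ω : Type*} {m0 : MeasurableSpace Ω} (μ : Measure Ω) [IsProbabilityMeasure μ]
    (ℱ : MeasureTheory.Filtration ℕ m0)
    (d : ℕ)
    (W : Set (EuclideanSpace ℝ (Fin d)))
    (hW_convex : Convex ℝ W)
    -- the metric projection onto `W`:
    (proj : EuclideanSpace ℝ (Fin d) → EuclideanSpace ℝ (Fin d))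
    (hproj_mem : ∀ x, proj x ∈ W)
    (hproj_dist : ∀ x, ∀ y ∈ W, ‖x - proj x‖ ≤ ‖x - y‖)
    (F : EuclideanSpace ℝ (Fin d) → ℝ) (hF_diff : Differentiable ℝ F)
    (lam : ℝ) (hlam : 0 < lam)
    -- `λ`-strong convexity of `F`:
    (hF_sc : ∀ v w : EuclideanSpace ℝ (Fin d),
      F w + ⟪gradient F w, v - w⟫ + lam / 2 * ‖v - w‖ ^ 2 ≤ F v)
    (wstar : EuclideanSpace ℝ (Fin d)) (hwstar_mem : wstar ∈ W)
    (hwstar_min : ∀ w ∈ W, F wstar ≤ F w)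
    (G : ℝ)
    (w g : ℕ → Ω → EuclideanSpace ℝ (Fin d))
    (w1 : EuclideanSpace ℝ (Fin d)) (hw1_mem : w1 ∈ W)
    (hw_adapted : ∀ t, StronglyMeasurable[ℱ t] (w t))
    (hg_int : ∀ t, Integrable (g t) μ)
    (hg_sq_int : ∀ t, Integrable (fun ω => ‖g t ω‖ ^ 2) μ)
    -- `E[g_t | 𝓕_t] = ∇F(w_t)`:
    (hg_unbiased : ∀ t, μ[g t|ℱ t] =ᵐ[μ] fun ω => gradient F (w t ω))
    -- `E[‖g_t‖² | 𝓕_t] ≤ G²` almost surely: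
    (hg_bdd : ∀ t, μ[fun ω => ‖g t ω‖ ^ 2|ℱ t] ≤ᵐ[μ] fun _ => G ^ 2)
    (hw_init : ∀ ω, w 1 ω = w1)
    (hw_rec : ∀ t, 1 ≤ t → ∀ ω,
      w (t + 1) ω = proj (w t ω - (2 / (lam * (t + 1))) • g t ω))
    (T : ℕ) (hT : 1 ≤ T) :
    (∫ ω, F ((2 / (T * (T + 1) : ℝ)) • ∑ t ∈ Finset.Icc 1 T, (t : ℝ) • w t ω) ∂μ) - F wstar ≤
      2 * G ^ 2 / (lam * (T + 1)) := by
  have hw_mem : ∀ t, 1 ≤ t → ∀ ω, w t ω ∈ W := by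
    refine Nat.le_induction (fun ω => hw_init ω ▸ hw1_mem) fun t ht _ ω => ?_
    rw [hw_rec t ht ω]
    exact hproj_mem _
  have hw_meas : ∀ t, AEStronglyMeasurable (w t) μ :=
    fun t => ((hw_adapted t).mono (ℱ.le t)).aestronglyMeasurable
  have hdescent : ∀ t, 1 ≤ t → ∀ ω, ‖w (t + 1) ω - wstar‖ ^ 2 ≤ ‖w t ω - wstar‖ ^ 2
      - 2 * (2 / (lam * (t + 1))) * ⟪g t ω, w t ω - wstar⟫
      + (2 / (lam * (t + 1))) ^ 2 * ‖g t ω‖ ^ 2 := fun t ht ω => by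
    rw [hw_rec t ht ω]
    exact hW_convex.sq_norm_nearest_step_sub_le (hproj_mem _) (hproj_dist _) hwstar_mem
  have hsq_int : ∀ t, 1 ≤ t → Integrable (fun ω => ‖w t ω - wstar‖ ^ 2) μ := by
    refine Nat.le_induction ?_ fun t ht ih => ProjectedSGD.integrable_sq_norm_sub_of_step
      (hw_meas t) (hg_int t).1 (hw_meas (t + 1)) ih (hg_sq_int t) (hdescent t ht)
    simp only [hw_init]
    exact integrable_const _
  have hstep := fun t (ht : 1 ≤ t) => ProjectedSGD.integral_step_le (ℱ.le t)
    hF_diff.continuous hF_sc hwstar_min (hw_mem t ht) (hw_adapted t) (hg_int t) (hg_sq_int t)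
    (hsq_int t ht) (hg_unbiased t) (integral_le_of_condExp_le_const (ℱ.le t) (hg_bdd t))
    (by positivity) (hsq_int (t + 1) (by omega)) (hdescent t ht)
  have hgap := ProjectedSGD.averaged_gap_le hlam (sq_nonneg G)
    (a := fun t => ∫ ω, ‖w t ω - wstar‖ ^ 2 ∂μ) (D := fun t => (∫ ω, F (w t ω) ∂μ) - F wstar)
    (fun t => integral_nonneg fun ω => sq_nonneg _) (fun t ht => (hstep t ht).2) hT
  have hweights : ∑ t ∈ Icc 1 T, 2 / (T * (T + 1)) * (t : ℝ) = 1 := by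
    have : (0 : ℝ) < T := by exact_mod_cast hT
    rw [← mul_sum, sum_Icc_one_natCast]
    field_simp
  have hF_convex : ConvexOn ℝ W F :=
    (convexOn_univ_of_le_add_inner (gradient F) fun x y => by
      nlinarith [hF_sc x y, sq_nonneg ‖x - y‖]).subset (Set.subset_univ W) hW_convex
  have hjensen := hF_convex.integral_map_sum_le (μ := μ) hF_diff.continuous hwstar_min
    (fun t _ => by positivity) hweights (fun t ht => hw_mem t (mem_Icc.1 ht).1)
    (fun t _ => hw_meas t) (fun t ht => (hstep t (mem_Icc.1 ht).1).1)
  calc (∫ ω, F ((2 / (T * (T + 1) : ℝ)) • ∑ t ∈ Icc 1 T, (t : ℝ) • w t ω) ∂μ) - F wstar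
      = (∫ ω, F (∑ t ∈ Icc 1 T, (2 / (T * (T + 1)) * (t : ℝ)) • w t ω) ∂μ) - F wstar := by
        simp only [smul_sum, smul_smul]
    _ ≤ (∑ t ∈ Icc 1 T, 2 / (T * (T + 1)) * (t : ℝ) * ∫ ω, F (w t ω) ∂μ) - F wstar := by
        linarith
    _ = ∑ t ∈ Icc 1 T, 2 / (T * (T + 1)) * (t : ℝ) * ((∫ ω, F (w t ω) ∂μ) - F wstar) := by
        simp only [mul_sub, sum_sub_distrib, ← sum_mul, hweights, one_mul]
    _ ≤ 2 * G ^ 2 / (lam * (T + 1)) := hgap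

/-- **Convergence of projected SGD with non-uniform averaging for strongly convex objectives.**
Let `W` be a nonempty closed convex subset of `ℝ^d` with metric projection `proj`, and let `F`
be differentiable and `λ`-strongly convex with minimizer `w*` over `W`.  Run projected
stochastic gradient descent `w_{t+1} = proj (w_t − η_t g_t)` with `η_t = 2/(λ(t+1))`, where
`g_t` is `𝓕_{t+1}`-measurable, `E[g_t | 𝓕_t] = ∇F(w_t)` and `E[‖g_t‖² | 𝓕_t] ≤ G²` a.s.
Then the weighted average `w̄_T = (2/(T(T+1))) Σ_{t=1}^T t·w_t` satisfies
`E[F(w̄_T)] − F(w*) ≤ 2G²/(λ(T+1))`. -/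
theorem sgd_strongly_convex_convergence
    {Ω : Type*} {m0 : MeasurableSpace Ω} (μ : Measure Ω) [IsProbabilityMeasure μ]
    (ℱ : MeasureTheory.Filtration ℕ m0)
    (d : ℕ)
    (W : Set (EuclideanSpace ℝ (Fin d))) (hW_ne : W.Nonempty) (hW_closed : IsClosed W)
    (hW_convex : Convex ℝ W)
    -- the metric projection onto `W`:
    (proj : EuclideanSpace ℝ (Fin d) → EuclideanSpace ℝ (Fin d))
    (hproj_mem : ∀ x, proj x ∈ W)
    (hproj_dist : ∀ x, ∀ y ∈ W, ‖x - proj x‖ ≤ ‖x - y‖)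
    (F : EuclideanSpace ℝ (Fin d) → ℝ) (hF_diff : Differentiable ℝ F)
    (lam : ℝ) (hlam : 0 < lam)
    -- `λ`-strong convexity of `F`:
    (hF_sc : ∀ v w : EuclideanSpace ℝ (Fin d),
      F w + ⟪gradient F w, v - w⟫ + lam / 2 * ‖v - w‖ ^ 2 ≤ F v)
    (wstar : EuclideanSpace ℝ (Fin d)) (hwstar_mem : wstar ∈ W)
    (hwstar_min : ∀ w ∈ W, F wstar ≤ F w)
    (G : ℝ)
    (w g : ℕ → Ω → EuclideanSpace ℝ (Fin d))
    (w1 : EuclideanSpace ℝ (Fin d)) (hw1_mem : w1 ∈ W)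
    (hw_adapted : ∀ t, StronglyMeasurable[ℱ t] (w t))
    (hg_meas : ∀ t, StronglyMeasurable[ℱ (t + 1)] (g t))
    (hg_int : ∀ t, Integrable (g t) μ)
    (hg_sq_int : ∀ t, Integrable (fun ω => ‖g t ω‖ ^ 2) μ)
    -- `E[g_t | 𝓕_t] = ∇F(w_t)`:
    (hg_unbiased : ∀ t, μ[g t|ℱ t] =ᵐ[μ] fun ω => gradient F (w t ω))
    -- `E[‖g_t‖² | 𝓕_t] ≤ G²` almost surely:
    (hg_bdd : ∀ t, μ[fun ω => ‖g t ω‖ ^ 2|ℱ t] ≤ᵐ[μ] fun _ => G ^ 2)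
    (hw_init : ∀ ω, w 1 ω = w1)
    (hw_rec : ∀ t, 1 ≤ t → ∀ ω,
      w (t + 1) ω = proj (w t ω - (2 / (lam * (t + 1))) • g t ω))
    (T : ℕ) (hT : 1 ≤ T) :
    (∫ ω, F ((2 / (T * (T + 1) : ℝ)) • ∑ t ∈ Finset.Icc 1 T, (t : ℝ) • w t ω) ∂μ) - F wstar ≤
      2 * G ^ 2 / (lam * (T + 1)) :=
  sgd_strongly_convex_convergence_general μ ℱ d W hW_convex proj hproj_mem hproj_dist F hF_diff lam
    hlam hF_sc wstar hwstar_mem hwstar_min G w g w1 hw1_mem hw_adapted hg_int hg_sq_int hg_unbiased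
    hg_bdd hw_init hw_rec T hT
end

section
/- Privacy loss distribution of the Gaussian mechanism. Let m, m' ∈ ℝ with m ≠ m' and σ > 0, and set η := |m − m'|/σ. Let p and q denote the probability density functions of the one-dimensional Gaussian distributions N(m, σ²) and N(m', σ²). Then the pushforward of the measure N(m, σ²) under the log-likelihood-ratio map x ↦ log(p(x)/q(x)) = (m − m')(2x − m − m')/(2σ²) is exactly the Gaussian distribution N(η²/2, η²) on ℝ (mean η²/2, variance η²). -/
/-!
Since the two densities share the variance `v`, the log-likelihood ratio is the affine map
`x ↦ (μ - μ')/v · x + (μ'² - μ²)/(2v)`, and an affine image of a Gaussian is Gaussian with mean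
`(μ - μ')²/(2v)` and variance `(μ - μ')²/v`.
-/

open MeasureTheory ProbabilityTheory NNReal

namespace ProbabilityTheory

lemma gaussianReal_map_const_mul_add (μ : ℝ) (v : ℝ≥0) (a b : ℝ) :
    (gaussianReal μ v).map (fun x ↦ a * x + b) =
      gaussianReal (a * μ + b) (.mk (a ^ 2) (sq_nonneg a) * v) := by
  have hcomp : (fun x : ℝ ↦ a * x + b) = (· + b) ∘ (a * ·) := rfl
  rw [hcomp, ← Measure.map_map (measurable_add_const b) (measurable_const_mul a),
    gaussianReal_map_const_mul, gaussianReal_map_add_const]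

lemma log_gaussianPDFReal_div_gaussianPDFReal (μ μ' : ℝ) {v : ℝ≥0} (hv : v ≠ 0) (x : ℝ) :
    Real.log (gaussianPDFReal μ v x / gaussianPDFReal μ' v x) =
      (μ - μ') / v * x + (μ' ^ 2 - μ ^ 2) / (2 * v) := by
  have hv' : (v : ℝ) ≠ 0 := NNReal.coe_ne_zero.mpr hv
  have hnorm : (√(2 * Real.pi * v))⁻¹ ≠ 0 := inv_ne_zero (by positivity)
  rw [gaussianPDFReal, gaussianPDFReal, mul_div_mul_left _ _ hnorm, ← Real.exp_sub, Real.log_exp]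
  field_simp
  ring

theorem gaussianReal_map_log_gaussianPDFReal_div (μ μ' : ℝ) {v : ℝ≥0} (hv : v ≠ 0) :
    (gaussianReal μ v).map (fun x ↦ Real.log (gaussianPDFReal μ v x / gaussianPDFReal μ' v x)) =
      gaussianReal ((μ - μ') ^ 2 / (2 * v)) ⟨(μ - μ') ^ 2 / v, by positivity⟩ := by
  have hv' : (v : ℝ) ≠ 0 := NNReal.coe_ne_zero.mpr hv
  simp_rw [log_gaussianPDFReal_div_gaussianPDFReal μ μ' hv, gaussianReal_map_const_mul_add]
  congr 1
  · field_simp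
    ring
  · ext
    change ((μ - μ') / v) ^ 2 * v = (μ - μ') ^ 2 / v
    field_simp

end ProbabilityTheory

theorem gaussian_privacy_loss_distribution_general (m m' σ : ℝ) (hσ : 0 < σ) :
    Measure.map
        (fun x : ℝ =>
          Real.log (gaussianPDFReal m ⟨σ ^ 2, sq_nonneg σ⟩ x /
            gaussianPDFReal m' ⟨σ ^ 2, sq_nonneg σ⟩ x))
        (gaussianReal m ⟨σ ^ 2, sq_nonneg σ⟩) =
      gaussianReal ((|m - m'| / σ) ^ 2 / 2) ⟨(|m - m'| / σ) ^ 2, sq_nonneg _⟩ := by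
  have hv : (⟨σ ^ 2, sq_nonneg σ⟩ : ℝ≥0) ≠ 0 := fun h ↦ pow_ne_zero 2 hσ.ne' (congrArg Subtype.val h)
  have hη : (|m - m'| / σ) ^ 2 = (m - m') ^ 2 / σ ^ 2 := by rw [div_pow, sq_abs]
  rw [gaussianReal_map_log_gaussianPDFReal_div m m' hv]
  congr 1
  · change (m - m') ^ 2 / (2 * σ ^ 2) = _
    rw [hη, div_div, mul_comm]
  · ext
    exact hη.symm

/-- **Privacy loss distribution of the one-dimensional Gaussian mechanism.**
Let `p`, `q` be the densities of `N(m, σ²)` and `N(m', σ²)` with `m ≠ m'`, `σ > 0`, and set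
`η = |m − m'|/σ`. Then the pushforward of `N(m, σ²)` under the log-likelihood-ratio map
`x ↦ log (p x / q x)` is exactly the Gaussian distribution `N(η²/2, η²)`. -/
theorem gaussian_privacy_loss_distribution (m m' σ : ℝ) (hne : m ≠ m') (hσ : 0 < σ) :
    Measure.map
        (fun x : ℝ =>
          Real.log (gaussianPDFReal m ⟨σ ^ 2, sq_nonneg σ⟩ x /
            gaussianPDFReal m' ⟨σ ^ 2, sq_nonneg σ⟩ x))
        (gaussianReal m ⟨σ ^ 2, sq_nonneg σ⟩) =
      gaussianReal ((|m - m'| / σ) ^ 2 / 2) ⟨(|m - m'| / σ) ^ 2, sq_nonneg _⟩ :=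
  gaussian_privacy_loss_distribution_general m m' σ hσ
end
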